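/- arXiv:1702.00201 — 2 statements merged into one kernel-verified Lean document; each statement's English description precedes it below -/
import Mathlib

section
/- The set 𝕍 of Young measures on [0,T] × A is compact for the topology of weak convergence: every sequence (μ_n) of finite nonnegative Borel measures on [0,T] × A whose pushforwards under the projection (t,a) ↦ t all equal Lebesgue measure on [0,T] admits a subsequence converging weakly to a measure μ ∈ 𝕍. -/
/-!
The marginal condition forces every `μ n` to have the same total mass and to vanish outside the
compact set `[0,T] × A`. By Prokhorov's theorem the normalized probability measures then have a
convergent subsequence (sequentially, since the weak topology on probability measures over a
separable metrizable space is metrizable), and rescaling by the common mass gives a weak limit of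
the `μ (φ n)`. The marginal condition passes to this limit because pushing forward along the
continuous projection is weakly continuous and finite measures form a Hausdorff space.
-/

open MeasureTheory Filter Topology
open scoped NNReal
open TopologicalSpace

namespace MeasureTheory

theorem Measure.measure_compl_preimage_eq_zero_of_map_eq_restrict {α β : Type*}
    [MeasurableSpace α] [MeasurableSpace β] {f : α → β} (hf : Measurable f) {s : Set β}
    (hs : MeasurableSet s) {μ : Measure α} {ν : Measure β} (h : μ.map f = ν.restrict s) :
    μ (f ⁻¹' s)ᶜ = 0 := by
  rw [← Set.preimage_compl, ← Measure.map_apply hf hs.compl, h, Measure.restrict_apply hs.compl,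
    Set.compl_inter_self, measure_empty]

theorem FiniteMeasure.mass_eq_of_toMeasure_map_eq {Ω Ω' : Type*} [MeasurableSpace Ω]
    [MeasurableSpace Ω'] {f : Ω → Ω'} (hf : Measurable f) {μ ν : FiniteMeasure Ω}
    (h : (μ : Measure Ω).map f = (ν : Measure Ω).map f) : μ.mass = ν.mass := by
  rw [← ENNReal.coe_inj, ennreal_mass, ennreal_mass, ← Set.preimage_univ (f := f),
    ← Measure.map_apply hf .univ, h, Measure.map_apply hf .univ]


section Sequential

variable {Ω : Type*} [TopologicalSpace Ω] [MetrizableSpace Ω] [SeparableSpace Ω]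
  [MeasurableSpace Ω] [BorelSpace Ω] {K : Set Ω}

theorem ProbabilityMeasure.exists_subseq_tendsto_of_measure_compl_eq_zero (hK : IsCompact K)
    (P : ℕ → ProbabilityMeasure Ω) (hP : ∀ n, P n Kᶜ = 0) :
    ∃ φ : ℕ → ℕ, StrictMono φ ∧ ∃ Q : ProbabilityMeasure Ω, Tendsto (P ∘ φ) atTop (𝓝 Q) := by
  have hcomp : IsCompact {Q : ProbabilityMeasure Ω | ∀ _ : ℕ, Q Kᶜ ≤ 0} :=
    isCompact_setOfPred_probabilityMeasure_mass_eq_compl_isCompact_le tendsto_const_nhds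
      (fun _ ↦ hK) (Or.inr monotone_const)
  obtain ⟨Q, -, φ, hφ, hlim⟩ := hcomp.tendsto_subseq (x := P) fun n _ ↦ (hP n).le
  exact ⟨φ, hφ, Q, hlim⟩

theorem FiniteMeasure.exists_subseq_tendsto_of_mass_eq_of_measure_compl_eq_zero (hK : IsCompact K)
    {c : ℝ≥0} (μ : ℕ → FiniteMeasure Ω) (hmass : ∀ n, (μ n).mass = c)
    (hsupp : ∀ n, (μ n : Measure Ω) Kᶜ = 0) :
    ∃ φ : ℕ → ℕ, StrictMono φ ∧ ∃ ν : FiniteMeasure Ω, Tendsto (μ ∘ φ) atTop (𝓝 ν) := by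
  rcases eq_or_ne c 0 with rfl | hc
  · have hzero : μ = fun _ ↦ 0 := funext fun n ↦ (μ n).mass_zero_iff.mp (hmass n)
    exact ⟨id, strictMono_id, 0, by rw [hzero]; exact tendsto_const_nhds⟩
  have hμ : ∀ n, μ n ≠ 0 := fun n ↦ (μ n).mass_nonzero_iff.mp (hmass n ▸ hc)
  have : Nonempty Ω := by
    by_contra h
    rw [not_nonempty_iff] at h
    exact hμ 0 (toMeasure_injective (Subsingleton.elim _ _))
  obtain ⟨φ, hφ, Q, hQ⟩ := ProbabilityMeasure.exists_subseq_tendsto_of_measure_compl_eq_zero hK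
    (fun n ↦ (μ n).normalize) fun n ↦ by
      rw [normalize_eq_of_nonzero _ (hμ n),
        (null_iff_toMeasure_null _ _).mpr (hsupp n), mul_zero]
  have hmass_lim : (c • Q.toFiniteMeasure).mass = c := by
    rw [mass, smul_apply, smul_eq_mul, ProbabilityMeasure.coeFn_toFiniteMeasure,
      ProbabilityMeasure.coeFn_univ, mul_one]
  have hnormalize_lim : (c • Q.toFiniteMeasure).normalize = Q := by
    apply ProbabilityMeasure.eq_of_forall_apply_eq
    intro s _
    rw [normalize_eq_of_nonzero _ ((mass_nonzero_iff _).mp (hmass_lim.symm ▸ hc)), hmass_lim,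
      smul_apply, smul_eq_mul, inv_mul_cancel_left₀ hc, ProbabilityMeasure.coeFn_toFiniteMeasure]
  rw [← hnormalize_lim] at hQ
  refine ⟨φ, hφ, c • Q.toFiniteMeasure, ?_⟩
  refine tendsto_of_tendsto_normalize_testAgainstNN_of_tendsto_mass hQ ?_
  simp only [Function.comp_apply, hmass, hmass_lim, tendsto_const_nhds]

end Sequential

theorem FiniteMeasure.toMeasure_map_eq_of_tendsto {Ω Ω' : Type*} [TopologicalSpace Ω]
    [MeasurableSpace Ω] [OpensMeasurableSpace Ω] [TopologicalSpace Ω'] [MeasurableSpace Ω']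
    [HasOuterApproxClosed Ω'] [BorelSpace Ω'] {f : Ω → Ω'} (hf : Continuous f)
    {ι : Type*} {l : Filter ι} [l.NeBot] {μs : ι → FiniteMeasure Ω} {μ : FiniteMeasure Ω}
    {ν : Measure Ω'} (hlim : Tendsto μs l (𝓝 μ)) (hν : ∀ i, (μs i : Measure Ω).map f = ν) :
    (μ : Measure Ω).map f = ν := by
  have hclosed : IsClosed {m : FiniteMeasure Ω' | (m : Measure Ω') = ν} :=
    Set.Subsingleton.isClosed fun a ha b hb ↦ toMeasure_injective (ha.trans hb.symm)
  simpa using (hclosed.preimage (continuous_map hf)).mem_of_tendsto hlim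
    (Eventually.of_forall fun i ↦ by simpa using hν i)

end MeasureTheory

theorem young_measures_compact_general
    {A : Type*} [MetricSpace A] [CompactSpace A]
    [MeasurableSpace A] [BorelSpace A]
    (T : ℝ)
    (μ : ℕ → FiniteMeasure (ℝ × A))
    (hproj : ∀ n, ((μ n : Measure (ℝ × A)).map Prod.fst)
      = volume.restrict (Set.Icc 0 T)) :
    ∃ φ : ℕ → ℕ, StrictMono φ ∧ ∃ μlim : FiniteMeasure (ℝ × A),
      ((μlim : Measure (ℝ × A)).map Prod.fst) = volume.restrict (Set.Icc 0 T) ∧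
      Tendsto (μ ∘ φ) atTop (𝓝 μlim) := by
  have hK : IsCompact (Prod.fst ⁻¹' Set.Icc 0 T : Set (ℝ × A)) := by
    simpa only [Set.prod_univ] using isCompact_Icc.prod (isCompact_univ (X := A))
  have hsupp n : (μ n : Measure (ℝ × A)) (Prod.fst ⁻¹' Set.Icc 0 T)ᶜ = 0 :=
    Measure.measure_compl_preimage_eq_zero_of_map_eq_restrict measurable_fst measurableSet_Icc
      (hproj n)
  have hmass n : (μ n).mass = (μ 0).mass :=
    FiniteMeasure.mass_eq_of_toMeasure_map_eq measurable_fst ((hproj n).trans (hproj 0).symm)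
  obtain ⟨φ, hφ, μlim, hlim⟩ :=
    FiniteMeasure.exists_subseq_tendsto_of_mass_eq_of_measure_compl_eq_zero hK μ hmass hsupp
  exact ⟨φ, hφ, μlim,
    FiniteMeasure.toMeasure_map_eq_of_tendsto continuous_fst hlim fun n ↦ hproj (φ n), hlim⟩

/-- The set 𝕍 of Young measures on [0,T] × A is (sequentially) compact
for the topology of weak convergence: every sequence of finite measures whose first
marginal is Lebesgue measure on [0,T] admits a subsequence converging weakly to a
Young measure. -/
theorem young_measures_compact
    {A : Type*} [MetricSpace A] [CompactSpace A] [Nonempty A]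
    [MeasurableSpace A] [BorelSpace A]
    (T : ℝ) (hT : 0 < T)
    (μ : ℕ → FiniteMeasure (ℝ × A))
    (hproj : ∀ n, ((μ n : Measure (ℝ × A)).map Prod.fst)
      = volume.restrict (Set.Icc 0 T)) :
    ∃ φ : ℕ → ℕ, StrictMono φ ∧ ∃ μlim : FiniteMeasure (ℝ × A),
      ((μlim : Measure (ℝ × A)).map Prod.fst) = volume.restrict (Set.Icc 0 T) ∧
      Tendsto (μ ∘ φ) atTop (𝓝 μlim) :=
  young_measures_compact_general T μ hproj
end

section
/- Deterministic chattering lemma: for every Young measure μ ∈ 𝕍 there exists a sequence of Borel measurable functions u_n : [0,T] → A such that the measures μ_n, defined as the pushforward of Lebesgue measure on [0,T] under the map t ↦ (t, u_n(t)) (equivalently, μ_n = dt δ_{u_n(t)}(da)), converge weakly to μ as n → ∞. -/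
open MeasureTheory Filter Topology



/-- Union of consecutive Ico's. -/
lemma iUnion_Ico_consec (a : ℕ → ℝ) (ha : Monotone a) (n : ℕ) :
    ⋃ i ∈ Finset.range n, Set.Ico (a i) (a (i+1)) = Set.Ico (a 0) (a n) := by
  induction n with
  | zero => simp
  | succ n ih =>
    rw [Finset.range_add_one, Finset.set_biUnion_insert, ih, Set.union_comm,
      Set.Ico_union_Ico_eq_Ico (ha (Nat.zero_le n)) (ha n.le_succ)]

/-- A measurable function piecewise constant on finitely many disjoint measurable sets. -/
lemma chat_piecewise {A : Type*} [MeasurableSpace A] {ι : Type*}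
    (s : Finset ι) (J : ι → Set ℝ)
    (hJ : ∀ q ∈ s, MeasurableSet (J q))
    (hdisj : ∀ q ∈ s, ∀ r ∈ s, q ≠ r → Disjoint (J q) (J r))
    (v : ι → A) (a0 : A) :
    ∃ u : ℝ → A, Measurable u ∧ ∀ q ∈ s, ∀ t ∈ J q, u t = v q := by
  classical
  induction s using Finset.induction_on with
  | empty => exact ⟨fun _ => a0, measurable_const, by simp⟩
  | insert q s' hq ih =>
    obtain ⟨u, hu, hval⟩ := ih (fun r hr => hJ r (Finset.mem_insert_of_mem hr))
      (fun r hr r' hr' hne => hdisj r (Finset.mem_insert_of_mem hr) r'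
        (Finset.mem_insert_of_mem hr') hne)
    refine ⟨(J q).piecewise (fun _ => v q) u,
      Measurable.piecewise (hJ q (Finset.mem_insert_self q s')) measurable_const hu, ?_⟩
    intro r hr t ht
    rcases Finset.mem_insert.1 hr with rfl | hr'
    · simp [Set.piecewise, ht]
    · have hne : q ≠ r := by rintro rfl; exact hq hr'
      have htq : t ∉ J q := by
        intro htq
        exact (hdisj q (Finset.mem_insert_self q s') r hr hne).le_bot ⟨htq, ht⟩
      simp [Set.piecewise, htq, hval r hr' t ht]


lemma chat_partition {A : Type*} [MetricSpace A] [CompactSpace A] [Nonempty A]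
    [MeasurableSpace A] [BorelSpace A] (δ : ℝ) (hδ : 0 < δ) :
    ∃ (p : ℕ) (B : ℕ → Set A) (a : ℕ → A),
      (∀ i, MeasurableSet (B i)) ∧
      (Pairwise (Function.onFun Disjoint B)) ∧
      (⋃ i ∈ Finset.range p, B i) = Set.univ ∧
      (∀ i, B i ⊆ Metric.ball (a i) δ) := by
  classical
  haveI : Inhabited A := Classical.inhabited_of_nonempty ‹_›
  obtain ⟨t, ht⟩ := IsCompact.elim_finite_subcover (isCompact_univ (X := A))
    (fun x : A => Metric.ball x δ) (fun x => Metric.isOpen_ball)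
    (fun x _ => Set.mem_iUnion.2 ⟨x, Metric.mem_ball_self hδ⟩)
  set l := t.toList with hl
  have hne : l ≠ [] := by
    intro h
    have := ht (Set.mem_univ (Classical.arbitrary A))
    rcases Set.mem_iUnion₂.1 this with ⟨y, hy, -⟩
    have : y ∈ l := by simpa [hl] using hy
    simp [h] at this
  set p := l.length with hp
  have hp1 : 1 ≤ p := by
    have := List.length_pos_iff.2 hne
    omega
  set a : ℕ → A := fun i => l.getD (min i (p-1)) default with ha
  set g : ℕ → Set A := fun i => Metric.ball (a i) δ with hg
  have haconst : ∀ i, p ≤ i → a i = a (p-1) := by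
    intro i hi
    simp only [ha]
    congr 1
    omega
  refine ⟨p, disjointed g, a, fun i => MeasurableSet.disjointed
    (fun i => measurableSet_ball) i, disjoint_disjointed g, ?_,
    fun i => (disjointed_subset g i)⟩
  apply Set.eq_univ_of_univ_subset
  intro x _
  have hx : x ∈ ⋃ i, g i := by
    rcases Set.mem_iUnion₂.1 (ht (Set.mem_univ x)) with ⟨y, hy, hxy⟩
    have hyl : y ∈ l := by simpa [hl] using hy
    rcases List.mem_iff_getElem.1 hyl with ⟨j, hj, rfl⟩
    refine Set.mem_iUnion.2 ⟨j, ?_⟩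
    have hmin : min j (p-1) = j := by omega
    have : a j = l[j] := by
      simp only [ha, hmin]
      exact List.getD_eq_getElem l default hj
    rw [hg]; simpa [this] using hxy
  rw [← iUnion_disjointed] at hx
  rcases Set.mem_iUnion.1 hx with ⟨i, hi⟩
  have hip : i < p := by
    by_contra h
    push_neg at h
    obtain ⟨k, rfl⟩ : ∃ k, i = k + 1 := ⟨i - 1, by omega⟩
    have hgi : g (k+1) = g (p-1) := by rw [hg]; simp only [haconst (k+1) h]
    have : disjointed g (k+1) = ∅ := by
      rw [← Order.succ_eq_add_one, disjointed_succ _ (not_isMax k), Order.succ_eq_add_one]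
      refine sdiff_eq_bot_iff.2 ?_
      rw [hgi]
      exact le_partialSups_of_le g (by omega)
    rw [this] at hi
    exact hi
  exact Set.mem_biUnion (Finset.mem_range.2 hip) hi

lemma chat_step
    {A : Type*} [MetricSpace A] [CompactSpace A] [Nonempty A]
    [MeasurableSpace A] [BorelSpace A]
    (T : ℝ) (hT : 0 < T) (μ : Measure (ℝ × A)) [IsFiniteMeasure μ]
    (hproj : μ.map Prod.fst = volume.restrict (Set.Icc 0 T))
    (δ : ℝ) (hδ : 0 < δ) :
    ∃ u : ℝ → A, Measurable u ∧
      ∀ (f : BoundedContinuousFunction (ℝ × A) ℝ) (ε : ℝ), 0 ≤ ε →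
        (∀ x ∈ Set.Icc (0:ℝ) T ×ˢ (Set.univ : Set A),
         ∀ y ∈ Set.Icc (0:ℝ) T ×ˢ (Set.univ : Set A),
            dist x y < δ → |f x - f y| ≤ ε) →
        |(∫ t in Set.Icc (0:ℝ) T, f (t, u t)) - ∫ x, f x ∂μ| ≤ 2 * ε * T := by
  classical
  haveI : Inhabited A := Classical.inhabited_of_nonempty ‹_›
  obtain ⟨p, B, a, hBm, hBdisj, hBcover, hBball⟩ := chat_partition (A := A) δ hδ
  set N : ℕ := ⌈T / δ⌉₊ + 1 with hNdef
  have hN0 : (0:ℝ) < N := by positivity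
  have hTN : T / N < δ := by
    have h1 : T / δ ≤ (⌈T / δ⌉₊ : ℝ) := Nat.le_ceil _
    have h2 : (⌈T / δ⌉₊ : ℝ) < N := by
      rw [hNdef]; push_cast; linarith
    have h3 : T / δ < N := lt_of_le_of_lt h1 h2
    rw [div_lt_iff₀ hN0]
    calc T = (T / δ) * δ := by field_simp
    _ < N * δ := mul_lt_mul_of_pos_right h3 hδ
    _ = δ * N := mul_comm _ _
  -- time grid
  set τ : ℕ → ℝ := fun j => T * j / N with hτ
  have hτmono : Monotone τ := by
    intro j k hjk
    have : (j:ℝ) ≤ k := by exact_mod_cast hjk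
    simp only [hτ]
    gcongr
  have hτ0 : τ 0 = 0 := by simp [hτ]
  have hτN : τ N = T := by simp only [hτ]; exact mul_div_cancel_right₀ T hN0.ne'
  set I : ℕ → Set ℝ := fun j => Set.Ico (τ j) (τ (j+1)) with hI
  have hIsub : ∀ j, j < N → I j ⊆ Set.Icc 0 T := by
    intro j hj s hs
    refine ⟨le_trans (by rw [← hτ0]; exact hτmono (Nat.zero_le j)) hs.1,
      le_trans (le_of_lt hs.2) (by rw [← hτN]; exact hτmono hj)⟩
  have hτdiff : ∀ j, τ (j+1) - τ j = T / N := by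
    intro j; simp only [hτ]; push_cast; ring
  -- masses
  set ν : ℕ → ℕ → ℝ := fun j i => (μ ((I j) ×ˢ B i)).toReal with hν
  have hν0 : ∀ j i, 0 ≤ ν j i := fun j i => ENNReal.toReal_nonneg
  have hmass : ∀ j, j < N → ∑ i ∈ Finset.range p, ν j i = T / N := by
    intro j hj
    have hdis : (↑(Finset.range p) : Set ℕ).PairwiseDisjoint (fun i => (I j) ×ˢ B i) := by
      intro i _ k _ hik
      exact Set.disjoint_prod.2 (Or.inr (hBdisj hik))
    have hms : ∀ i ∈ Finset.range p, MeasurableSet ((I j) ×ˢ B i) :=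
      fun i _ => measurableSet_Ico.prod (hBm i)
    have hU : ⋃ i ∈ Finset.range p, (I j) ×ˢ B i = (I j) ×ˢ (Set.univ : Set A) := by
      rw [← hBcover]
      ext x
      simp only [Set.mem_iUnion, Set.mem_prod]
      tauto
    have h1 : μ ((I j) ×ˢ (Set.univ : Set A)) = ENNReal.ofReal (T / N) := by
      rw [Set.prod_univ, ← Measure.map_apply measurable_fst measurableSet_Ico, hproj,
        Measure.restrict_apply measurableSet_Ico,
        Set.inter_eq_left.2 (hIsub j hj)]
      rw [hI]
      simp only []
      rw [Real.volume_Ico, hτdiff j]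
    calc ∑ i ∈ Finset.range p, ν j i
        = (∑ i ∈ Finset.range p, μ ((I j) ×ˢ B i)).toReal := by
          rw [ENNReal.toReal_sum (fun i _ => measure_ne_top μ _)]
      _ = (μ (⋃ i ∈ Finset.range p, (I j) ×ˢ B i)).toReal := by
          rw [measure_biUnion_finset hdis hms]
      _ = T / N := by rw [hU, h1, ENNReal.toReal_ofReal (by positivity)]
  -- cumulative subdivision points
  set c : ℕ → ℕ → ℝ := fun j i => τ j + ∑ k ∈ Finset.range i, ν j k with hc
  have hcmono : ∀ j, Monotone (c j) := by
    intro j i i' hii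
    simp only [hc]
    have := Finset.sum_le_sum_of_subset_of_nonneg
      (Finset.range_subset_range.2 hii) (fun k _ _ => hν0 j k)
    linarith
  have hc0 : ∀ j, c j 0 = τ j := by simp [hc]
  have hcd : ∀ j i, c j (i+1) = c j i + ν j i := by
    intro j i; simp [hc, Finset.sum_range_succ]; ring
  have hcp : ∀ j, j < N → c j p = τ (j+1) := by
    intro j hj
    simp only [hc, hmass j hj]
    have := hτdiff j
    linarith
  set J : ℕ → ℕ → Set ℝ := fun j i => Set.Ico (c j i) (c j (i+1)) with hJdef
  have hJsub : ∀ j i, j < N → i < p → J j i ⊆ I j := by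
    intro j i hj hi
    simp only [hJdef, hI]
    apply Set.Ico_subset_Ico
    · rw [← hc0 j]; exact hcmono j (Nat.zero_le i)
    · rw [← hcp j hj]; exact hcmono j hi
  have hJU : ∀ j, j < N → ⋃ i ∈ Finset.range p, J j i = I j := by
    intro j hj
    simp only [hJdef]
    rw [iUnion_Ico_consec (c j) (hcmono j) p, hc0, hcp j hj]
  have hIU : ⋃ j ∈ Finset.range N, I j = Set.Ico 0 T := by
    simp only [hI]
    rw [iUnion_Ico_consec τ hτmono N, hτ0, hτN]
  have hIdisj : ∀ j j', j ≠ j' → Disjoint (I j) (I j') := by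
    intro j j' hne
    simp only [hI]
    rw [Set.Ico_disjoint_Ico]
    rcases Nat.lt_or_ge j j' with h | h
    · exact le_trans (inf_le_left.trans (hτmono h)) le_sup_right
    · have h' : j' < j := by omega
      exact le_trans (inf_le_right.trans (hτmono h')) le_sup_left
  set Q : Finset (ℕ × ℕ) := Finset.range N ×ˢ Finset.range p with hQ
  set JJ : ℕ × ℕ → Set ℝ := fun q => J q.1 q.2 with hJJ
  have hQmem : ∀ q ∈ Q, q.1 < N ∧ q.2 < p := by
    intro q hq
    rw [hQ, Finset.mem_product, Finset.mem_range, Finset.mem_range] at hq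
    exact hq
  have hJJm : ∀ q ∈ Q, MeasurableSet (JJ q) := by
    intro q _; simp only [hJJ, hJdef]; exact measurableSet_Ico
  have hJJdisj : ∀ q ∈ Q, ∀ r ∈ Q, q ≠ r → Disjoint (JJ q) (JJ r) := by
    intro q hq r hr hne
    rcases eq_or_ne q.1 r.1 with h1 | h1
    · have h2 : q.2 ≠ r.2 := by
        intro h2; exact hne (Prod.ext h1 h2)
      simp only [hJJ, hJdef, ← h1]
      rw [Set.Ico_disjoint_Ico]
      rcases Nat.lt_or_ge q.2 r.2 with h | h
      · exact le_trans (inf_le_left.trans (hcmono q.1 h)) le_sup_right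
      · have h' : r.2 < q.2 := by omega
        exact le_trans (inf_le_right.trans (hcmono q.1 h')) le_sup_left
    · exact Disjoint.mono (hJsub q.1 q.2 (hQmem q hq).1 (hQmem q hq).2)
        (hJsub r.1 r.2 (hQmem r hr).1 (hQmem r hr).2) (hIdisj _ _ h1)
  obtain ⟨u, hu, huval⟩ := chat_piecewise Q JJ hJJm hJJdisj (fun q => a q.2) default
  refine ⟨u, hu, ?_⟩
  intro f ε hε hmod
  have hmeas : Measurable fun t => f (t, u t) :=
    f.continuous.measurable.comp (measurable_id.prodMk hu)
  have hib : ∀ q ∈ Q, IntegrableOn (fun t => f (t, u t)) (JJ q) volume := by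
    intro q hq
    have hvfin : volume (JJ q) < ⊤ := by
      simp only [hJJ, hJdef]; exact measure_Ico_lt_top
    exact Integrable.mono' (integrableOn_const hvfin.ne)
      hmeas.aestronglyMeasurable.restrict
      (Filter.Eventually.of_forall fun t => f.norm_coe_le_norm _)
  have hQU : ⋃ q ∈ Q, JJ q = Set.Ico 0 T := by
    have h1 : ⋃ q ∈ Q, JJ q = ⋃ j ∈ Finset.range N, ⋃ i ∈ Finset.range p, J j i := by
      ext x
      simp only [Set.mem_iUnion, hQ, hJJ, Finset.mem_product]
      constructor
      · rintro ⟨q, ⟨hq1, hq2⟩, hx⟩; exact ⟨q.1, hq1, q.2, hq2, hx⟩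
      · rintro ⟨j, hj, i, hi, hx⟩; exact ⟨(j, i), ⟨hj, hi⟩, hx⟩
    rw [h1, ← hIU]
    exact Set.iUnion_congr fun j => Set.iUnion_congr fun hj =>
      hJU j (Finset.mem_range.1 hj)
  -- LHS decomposition
  have hL : ∫ t in Set.Icc (0:ℝ) T, f (t, u t)
      = ∑ q ∈ Q, ∫ t in JJ q, f (t, a q.2) := by
    rw [← setIntegral_congr_set Ico_ae_eq_Icc, ← hQU,
      integral_biUnion_finset Q hJJm (fun q hq r hr => hJJdisj q hq r hr) hib]
    refine Finset.sum_congr rfl fun q hq => setIntegral_congr_fun (hJJm q hq) ?_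
    intro t ht
    show f (t, u t) = f (t, a q.2)
    rw [huval q hq t ht]
  -- RHS decomposition
  have hPm : ∀ q ∈ Q, MeasurableSet ((I q.1) ×ˢ B q.2) := by
    intro q _
    simp only [hI]
    exact measurableSet_Ico.prod (hBm q.2)
  have hPdisj : (↑Q : Set (ℕ × ℕ)).Pairwise (Function.onFun Disjoint fun q : ℕ × ℕ => (I q.1) ×ˢ B q.2) := by
    intro q _ r _ hne
    rcases eq_or_ne q.1 r.1 with h1 | h1
    · have h2 : q.2 ≠ r.2 := by
        intro h2; exact hne (Prod.ext h1 h2)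
      exact Set.disjoint_prod.2 (Or.inr (hBdisj h2))
    · exact Set.disjoint_prod.2 (Or.inl (hIdisj _ _ h1))
  have hμrest : μ.restrict (⋃ q ∈ Q, (I q.1) ×ˢ B q.2) = μ := by
    apply Measure.restrict_eq_self_of_ae_mem
    have hae : ∀ᵐ x : ℝ × A ∂μ, x.1 ∈ Set.Ico 0 T := by
      rw [ae_iff]
      have hset : {x : ℝ × A | ¬ x.1 ∈ Set.Ico 0 T} = Prod.fst ⁻¹' (Set.Ico 0 T)ᶜ := rfl
      rw [hset, ← Measure.map_apply measurable_fst measurableSet_Ico.compl, hproj,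
        Measure.restrict_apply measurableSet_Ico.compl]
      have hsing : (Set.Ico (0:ℝ) T)ᶜ ∩ Set.Icc 0 T = {T} := by
        ext s
        simp only [Set.mem_inter_iff, Set.mem_compl_iff, Set.mem_Ico, Set.mem_Icc,
          Set.mem_singleton_iff, not_and, not_lt]
        constructor
        · rintro ⟨h1, h2, h3⟩
          have := h1 h2
          linarith
        · rintro rfl
          exact ⟨fun _ => le_refl _, le_of_lt hT, le_refl _⟩
      rw [hsing, Real.volume_singleton]
    filter_upwards [hae] with x hx
    have hj : ∃ j ∈ Finset.range N, x.1 ∈ I j := by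
      have : x.1 ∈ ⋃ j ∈ Finset.range N, I j := by rw [hIU]; exact hx
      simpa using this
    have hi : ∃ i ∈ Finset.range p, x.2 ∈ B i := by
      have : x.2 ∈ ⋃ i ∈ Finset.range p, B i := by rw [hBcover]; trivial
      simpa using this
    obtain ⟨j, hj1, hj2⟩ := hj
    obtain ⟨i, hi1, hi2⟩ := hi
    have hmemQ : (j, i) ∈ Q := by
      rw [hQ]; exact Finset.mem_product.2 ⟨hj1, hi1⟩
    exact Set.mem_biUnion hmemQ (Set.mem_prod.2 ⟨hj2, hi2⟩)
  have hR : ∫ x, f x ∂μ = ∑ q ∈ Q, ∫ x in (I q.1) ×ˢ B q.2, f x ∂μ := by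
    conv_lhs => rw [← hμrest]
    exact integral_biUnion_finset Q hPm hPdisj
      (fun q _ => (f.integrable μ).integrableOn)
  -- midpoint values
  set Cq : ℕ × ℕ → ℝ := fun q => f (τ q.1, a q.2) with hCq
  have hτmem : ∀ j, j < N → τ j ∈ Set.Icc (0:ℝ) T := by
    intro j hj
    exact ⟨by rw [← hτ0]; exact hτmono (Nat.zero_le j),
      by rw [← hτN]; exact hτmono (le_of_lt hj)⟩
  have hdist1 : ∀ j, j < N → ∀ t ∈ I j, dist t (τ j) < δ := by
    intro j hj t ht
    simp only [hI, Set.mem_Ico] at ht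
    rw [Real.dist_eq, abs_of_nonneg (by linarith [ht.1])]
    have := hτdiff j
    linarith [ht.2]
  -- bound 1 : time pieces
  have hbound1 : ∀ q ∈ Q, |(∫ t in JJ q, f (t, a q.2)) - Cq q * ν q.1 q.2|
      ≤ ε * ν q.1 q.2 := by
    intro q hq
    obtain ⟨hq1, hq2⟩ := hQmem q hq
    have hvol : volume (JJ q) = ENNReal.ofReal (ν q.1 q.2) := by
      simp only [hJJ, hJdef]
      rw [Real.volume_Ico]
      congr 1
      rw [hcd]; ring
    have hvfin : volume (JJ q) < ⊤ := by rw [hvol]; exact ENNReal.ofReal_lt_top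
    have hvt : (volume (JJ q)).toReal = ν q.1 q.2 := by
      rw [hvol, ENNReal.toReal_ofReal (hν0 _ _)]
    have hcont : Continuous fun t : ℝ => f (t, a q.2) :=
      f.continuous.comp (continuous_id.prodMk continuous_const)
    have h1 : (∫ t in JJ q, f (t, a q.2)) - Cq q * ν q.1 q.2
        = ∫ t in JJ q, (f (t, a q.2) - Cq q) := by
      rw [integral_sub (Integrable.mono' (integrableOn_const hvfin.ne)
        hcont.aestronglyMeasurable.restrict
        (Filter.Eventually.of_forall fun t => f.norm_coe_le_norm _))
        (integrableOn_const hvfin.ne), setIntegral_const, measureReal_def, hvt, smul_eq_mul,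
        mul_comm]
    rw [← Real.norm_eq_abs, h1]
    calc ‖∫ t in JJ q, (f (t, a q.2) - Cq q)‖
        ≤ ε * (volume (JJ q)).toReal := by
          apply norm_setIntegral_le_of_norm_le_const hvfin ?_
          intro t ht
          have htI : t ∈ I q.1 := hJsub q.1 q.2 hq1 hq2 ht
          rw [Real.norm_eq_abs]
          apply hmod (t, a q.2) ⟨hIsub q.1 hq1 htI, trivial⟩
            (τ q.1, a q.2) ⟨hτmem q.1 hq1, trivial⟩
          rw [Prod.dist_eq]
          simp only [dist_self]
          exact max_lt (hdist1 q.1 hq1 t htI) hδ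
      _ = ε * ν q.1 q.2 := by rw [hvt]
  -- bound 2 : measure pieces
  have hbound2 : ∀ q ∈ Q, |(∫ x in (I q.1) ×ˢ B q.2, f x ∂μ) - Cq q * ν q.1 q.2|
      ≤ ε * ν q.1 q.2 := by
    intro q hq
    obtain ⟨hq1, hq2⟩ := hQmem q hq
    have hμfin : μ ((I q.1) ×ˢ B q.2) < ⊤ := measure_lt_top μ _
    have hvt : (μ ((I q.1) ×ˢ B q.2)).toReal = ν q.1 q.2 := rfl
    have h1 : (∫ x in (I q.1) ×ˢ B q.2, f x ∂μ) - Cq q * ν q.1 q.2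
        = ∫ x in (I q.1) ×ˢ B q.2, (f x - Cq q) ∂μ := by
      rw [integral_sub ((f.integrable μ).integrableOn)
        (integrableOn_const hμfin.ne), setIntegral_const, measureReal_def, hvt, smul_eq_mul,
        mul_comm]
    rw [← Real.norm_eq_abs, h1]
    calc ‖∫ x in (I q.1) ×ˢ B q.2, (f x - Cq q) ∂μ‖
        ≤ ε * (μ ((I q.1) ×ˢ B q.2)).toReal := by
          apply norm_setIntegral_le_of_norm_le_const hμfin ?_
          intro x hx
          obtain ⟨hx1, hx2⟩ := hx
          rw [Real.norm_eq_abs]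
          apply hmod x ⟨hIsub q.1 hq1 hx1, trivial⟩
            (τ q.1, a q.2) ⟨hτmem q.1 hq1, trivial⟩
          rw [Prod.dist_eq]
          exact max_lt (hdist1 q.1 hq1 x.1 hx1) (hBball q.2 hx2)
      _ = ε * ν q.1 q.2 := by rw [hvt]
  -- assemble
  rw [hL, hR, ← Finset.sum_sub_distrib]
  calc |∑ q ∈ Q, ((∫ t in JJ q, f (t, a q.2)) - ∫ x in (I q.1) ×ˢ B q.2, f x ∂μ)|
      ≤ ∑ q ∈ Q, |(∫ t in JJ q, f (t, a q.2)) - ∫ x in (I q.1) ×ˢ B q.2, f x ∂μ| :=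
        Finset.abs_sum_le_sum_abs _ _
    _ ≤ ∑ q ∈ Q, 2 * ε * ν q.1 q.2 := by
        refine Finset.sum_le_sum fun q hq => ?_
        calc |(∫ t in JJ q, f (t, a q.2)) - ∫ x in (I q.1) ×ˢ B q.2, f x ∂μ|
            = |((∫ t in JJ q, f (t, a q.2)) - Cq q * ν q.1 q.2)
              + (Cq q * ν q.1 q.2 - ∫ x in (I q.1) ×ˢ B q.2, f x ∂μ)| := by ring_nf
          _ ≤ |(∫ t in JJ q, f (t, a q.2)) - Cq q * ν q.1 q.2|
              + |Cq q * ν q.1 q.2 - ∫ x in (I q.1) ×ˢ B q.2, f x ∂μ| := abs_add_le _ _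
          _ ≤ ε * ν q.1 q.2 + ε * ν q.1 q.2 := by
              refine add_le_add (hbound1 q hq) ?_
              rw [abs_sub_comm]
              exact hbound2 q hq
          _ = 2 * ε * ν q.1 q.2 := by ring
    _ = 2 * ε * T := by
        rw [hQ, Finset.sum_product]
        have hrow : ∀ j ∈ Finset.range N, ∑ i ∈ Finset.range p, 2 * ε * ν j i
            = 2 * ε * (T / N) := by
          intro j hj
          rw [← Finset.mul_sum, hmass j (Finset.mem_range.1 hj)]
        rw [Finset.sum_congr rfl hrow, Finset.sum_const, Finset.card_range,
          nsmul_eq_mul]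
        field_simp


/-- Deterministic chattering lemma: every Young measure μ ∈ 𝕍 (a finite
measure on [0,T] × A whose first marginal is Lebesgue measure) is the weak limit of a
sequence of measures of the form dt δ_{u_n(t)}(da), i.e. pushforwards of Lebesgue
measure on [0,T] under t ↦ (t, u_n(t)) for Borel measurable maps u_n : [0,T] → A. -/
theorem chattering_deterministic
    {A : Type*} [MetricSpace A] [CompactSpace A] [Nonempty A]
    [MeasurableSpace A] [BorelSpace A]
    (T : ℝ) (hT : 0 < T)
    (μ : Measure (ℝ × A))
    (hproj : μ.map Prod.fst = volume.restrict (Set.Icc 0 T)) :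
    ∃ u : ℕ → ℝ → A, (∀ n, Measurable (u n)) ∧
      ∀ f : BoundedContinuousFunction (ℝ × A) ℝ,
        Tendsto
          (fun n => ∫ x, f x
            ∂((volume.restrict (Set.Icc (0:ℝ) T)).map (fun t => (t, u n t))))
          atTop (𝓝 (∫ x, f x ∂μ)) := by
  haveI : IsFiniteMeasure μ := by
    constructor
    have h1 : μ Set.univ = μ.map Prod.fst Set.univ := by
      rw [Measure.map_apply measurable_fst MeasurableSet.univ, Set.preimage_univ]
    rw [h1, hproj, Measure.restrict_apply MeasurableSet.univ, Set.univ_inter,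
      Real.volume_Icc]
    exact ENNReal.ofReal_lt_top
  choose u hu hprop using fun n : ℕ =>
    chat_step T hT μ hproj (1 / (n + 1 : ℝ)) (by positivity)
  refine ⟨u, hu, ?_⟩
  intro f
  have hmap : ∀ n, ∫ x, f x
      ∂((volume.restrict (Set.Icc (0:ℝ) T)).map (fun t => (t, u n t)))
      = ∫ t in Set.Icc (0:ℝ) T, f (t, u n t) := fun n =>
    integral_map ((measurable_id.prodMk (hu n)).aemeasurable)
      f.continuous.aestronglyMeasurable
  rw [Metric.tendsto_atTop]
  intro ε hε
  have hKcomp : IsCompact (Set.Icc (0:ℝ) T ×ˢ (Set.univ : Set A)) :=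
    isCompact_Icc.prod isCompact_univ
  have hUC := hKcomp.uniformContinuousOn_of_continuous f.continuous.continuousOn
  have hε' : 0 < ε / (4 * (T + 1)) := by positivity
  obtain ⟨δ₀, hδ₀, hδprop⟩ := Metric.uniformContinuousOn_iff.1 hUC _ hε'
  obtain ⟨n₀, hn₀⟩ := exists_nat_gt (1 / δ₀)
  refine ⟨n₀, fun n hn => ?_⟩
  rw [hmap n, Real.dist_eq]
  have h1 : (1 : ℝ) / (n + 1) < δ₀ := by
    have h2 : 1 / δ₀ < (n : ℝ) + 1 := by
      have : (n₀ : ℝ) ≤ n := by exact_mod_cast hn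
      linarith
    rw [div_lt_iff₀ (by positivity : (0:ℝ) < (n:ℝ) + 1)]
    have h3 : δ₀ * (1 / δ₀) < δ₀ * ((n:ℝ) + 1) :=
      mul_lt_mul_of_pos_left h2 hδ₀
    rw [mul_one_div, div_self (ne_of_gt hδ₀)] at h3
    linarith [h3]
  have hb := hprop n f (ε / (4 * (T + 1))) (le_of_lt hε') ?_
  · calc |(∫ t in Set.Icc (0:ℝ) T, f (t, u n t)) - ∫ x, f x ∂μ|
        ≤ 2 * (ε / (4 * (T + 1))) * T := hb
    _ < ε := by
        have h4 : (0:ℝ) < 4 * (T + 1) := by positivity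
        rw [show 2 * (ε / (4 * (T + 1))) * T = 2 * (ε * T) / (4 * (T + 1)) by ring,
          div_lt_iff₀ h4]
        nlinarith
  · intro x hx y hy hxy
    have := hδprop x hx y hy (lt_trans hxy h1)
    rw [Real.dist_eq] at this
    exact le_of_lt this
end
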